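/- arXiv:1006.1095 — 3 statements merged into one kernel-verified Lean document; each statement's English description precedes it below -/
import Mathlib

section
/- Let (X, δ) be a diversity and f ∈ T_X. Then: (1) f(A ∪ C) ≤ δ(A ∪ B) + f(B ∪ C) for all finite A, B, C ⊆ X with B ≠ ∅; (2) for every finite A ⊆ X, f(A) = sup over finite B ⊆ X of [ δ(A ∪ B) − f(B) ]. -/
open scoped Classical

noncomputable section

/-- A diversity: axioms (D1) and (D2). -/
def IsDiversity {X : Type*} (δ : Finset X → ℝ) : Prop :=
  (∀ A, 0 ≤ δ A) ∧ (∀ A, δ A = 0 ↔ A.card ≤ 1) ∧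
    ∀ A B C : Finset X, B ≠ ∅ → δ (A ∪ C) ≤ δ (A ∪ B) + δ (B ∪ C)

/-- Membership in `P_X`: `f ∅ = 0` and `Σ_{A ∈ 𝓐} f A ≥ δ (⋃ 𝓐)` for every finite
collection `𝓐` of finite subsets of `X`. -/
def MemP {X : Type*} (δ : Finset X → ℝ) (f : Finset X → ℝ) : Prop :=
  f ∅ = 0 ∧ ∀ 𝓐 : Finset (Finset X), δ (𝓐.sup id) ≤ ∑ A ∈ 𝓐, f A

/-- Membership in the tight span `T_X`: the pointwise-minimal elements of `P_X`. -/
def MemT {X : Type*} (δ : Finset X → ℝ) (f : Finset X → ℝ) : Prop :=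
  MemP δ f ∧ ∀ g : Finset X → ℝ, MemP δ g → (∀ A, g A ≤ f A) → g = f

/-!
Minimality of `f` is used in one way only: lowering the single value `f A` to any upper bound
`v` of the defects `δ (A ∪ ⋃ 𝓑) - ∑_{B ∈ 𝓑} f B` keeps the function in `P_X`, so `f A` is the
least upper bound of these defects over all finite collections `𝓑`. Comparing `f (⋃ 𝓑)` with
this supremum gives subadditivity `f (⋃ 𝓑) ≤ ∑_{B ∈ 𝓑} f B`, which lets each collection be
replaced by its union, so the supremum may be taken over single sets `B`. The triangle
inequality (1) then follows from (2) and axiom (D2).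
-/

lemma Finset.sum_union_le_add {ι : Type*} [DecidableEq ι] {g : ι → ℝ} (hg : ∀ i, 0 ≤ g i)
    (s t : Finset ι) : ∑ i ∈ s ∪ t, g i ≤ ∑ i ∈ s, g i + ∑ i ∈ t, g i := by
  have := Finset.sum_nonneg fun i (_ : i ∈ s ∩ t) => hg i
  linarith [Finset.sum_union_inter (s₁ := s) (s₂ := t) (f := g)]

namespace MemP

variable {X : Type*} {δ f : Finset X → ℝ}

lemma diversity_le (hf : MemP δ f) (A : Finset X) : δ A ≤ f A := by
  simpa using hf.2 {A}

lemma nonneg (hδ : ∀ A, 0 ≤ δ A) (hf : MemP δ f) (A : Finset X) : 0 ≤ f A :=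
  (hδ A).trans (hf.diversity_le A)

lemma diversity_union_sup_sub_sum_le (hδ : ∀ A, 0 ≤ δ A) (hf : MemP δ f) (A : Finset X)
    (𝓑 : Finset (Finset X)) : δ (A ∪ 𝓑.sup id) - ∑ B ∈ 𝓑, f B ≤ f A := by
  have hcover := hf.2 ({A} ∪ 𝓑)
  rw [Finset.sup_union, Finset.sup_singleton, id, Finset.sup_eq_union] at hcover
  have hsum := Finset.sum_union_le_add (hf.nonneg hδ) {A} 𝓑
  rw [Finset.sum_singleton] at hsum
  linarith

lemma update {A : Finset X} (hf : MemP δ f) (hA : A ≠ ∅) {v : ℝ}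
    (hv : ∀ 𝓑 : Finset (Finset X), δ (A ∪ 𝓑.sup id) - ∑ B ∈ 𝓑, f B ≤ v) :
    MemP δ (Function.update f A v) := by
  refine ⟨by rw [Function.update_of_ne hA.symm]; exact hf.1, fun 𝓐 => ?_⟩
  by_cases hA𝓐 : A ∈ 𝓐
  · rw [Finset.sum_update_of_mem hA𝓐]
    have hsup : 𝓐.sup id = A ∪ (𝓐 \ {A}).sup id := by
      conv_lhs => rw [← Finset.insert_erase hA𝓐, ← Finset.sdiff_singleton_eq_erase]
      rw [Finset.sup_insert]
      rfl
    rw [hsup]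
    linarith [hv (𝓐 \ {A})]
  · rw [Finset.sum_update_of_notMem hA𝓐]
    exact hf.2 𝓐

end MemP

namespace MemT

variable {X : Type*} {δ f : Finset X → ℝ}

lemma eq_of_memP_update (hf : MemT δ f) {A : Finset X} {v : ℝ} (hv : v ≤ f A)
    (hP : MemP δ (Function.update f A v)) : v = f A := by
  have hle : ∀ B, Function.update f A v B ≤ f B := by
    intro B
    rcases eq_or_ne B A with rfl | hB
    · simpa using hv
    · rw [Function.update_of_ne hB]
  simpa using congrFun (hf.2 _ hP hle) A

lemma isLUB_diversity_union_sup_sub_sum (hδ : ∀ A, 0 ≤ δ A) (hf : MemT δ f) (A : Finset X) :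
    IsLUB {r | ∃ 𝓑 : Finset (Finset X), r = δ (A ∪ 𝓑.sup id) - ∑ B ∈ 𝓑, f B} (f A) := by
  refine ⟨?_, fun u hu => ?_⟩
  · rintro _ ⟨𝓑, rfl⟩
    exact hf.1.diversity_union_sup_sub_sum_le hδ A 𝓑
  have hu' : ∀ 𝓑 : Finset (Finset X), δ (A ∪ 𝓑.sup id) - ∑ B ∈ 𝓑, f B ≤ u :=
    fun 𝓑 => hu ⟨𝓑, rfl⟩
  rcases eq_or_ne A ∅ with rfl | hA
  · have hempty := hu' ∅
    rw [Finset.sum_empty, sub_zero] at hempty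
    exact hf.1.1 ▸ (hδ _).trans hempty
  · by_contra! hlt
    linarith [hf.eq_of_memP_update hlt.le (hf.1.update hA hu')]

lemma apply_sup_le_sum (hδ : ∀ A, 0 ≤ δ A) (hf : MemT δ f) (𝓑 : Finset (Finset X)) :
    f (𝓑.sup id) ≤ ∑ B ∈ 𝓑, f B := by
  refine (hf.isLUB_diversity_union_sup_sub_sum hδ _).2 ?_
  rintro _ ⟨𝓒, rfl⟩
  have hcover := hf.1.2 (𝓑 ∪ 𝓒)
  rw [Finset.sup_union, Finset.sup_eq_union] at hcover
  linarith [Finset.sum_union_le_add (hf.1.nonneg hδ) 𝓑 𝓒]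

lemma isLUB_diversity_union_sub (hδ : ∀ A, 0 ≤ δ A) (hf : MemT δ f) (A : Finset X) :
    IsLUB {r | ∃ B : Finset X, r = δ (A ∪ B) - f B} (f A) := by
  have hlub := hf.isLUB_diversity_union_sup_sub_sum hδ A
  refine ⟨?_, fun u hu => hlub.2 ?_⟩
  · rintro _ ⟨B, rfl⟩
    simpa using hlub.1 ⟨{B}, rfl⟩
  · rintro _ ⟨𝓑, rfl⟩
    linarith [hf.apply_sup_le_sum hδ 𝓑, hu ⟨𝓑.sup id, rfl⟩]

end MemT

/-- if `f ∈ T_X` then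
(1) `f (A ∪ C) ≤ δ (A ∪ B) + f (B ∪ C)` for finite `A B C ⊆ X` with `B ≠ ∅`;
(2) `f A = sup { δ (A ∪ B) - f B : B a finite subset of X }`. -/
theorem tightSpan_member_triangle_and_sup {X : Type*} (δ : Finset X → ℝ)
    (hδ : IsDiversity δ) (f : Finset X → ℝ) (hf : MemT δ f) :
    (∀ A B C : Finset X, B ≠ ∅ → f (A ∪ C) ≤ δ (A ∪ B) + f (B ∪ C)) ∧
    (∀ A : Finset X, f A = sSup {r : ℝ | ∃ B : Finset X, r = δ (A ∪ B) - f B}) := by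
  have hlub := hf.isLUB_diversity_union_sub hδ.1
  refine ⟨fun A B C hB => (hlub (A ∪ C)).2 ?_, fun A => ((hlub A).csSup_eq ⟨_, ∅, rfl⟩).symm⟩
  rintro _ ⟨D, rfl⟩
  have hD := (hlub (B ∪ C)).1 ⟨D, rfl⟩
  have htri := hδ.2.2 A B (C ∪ D) hB
  simp only [Finset.union_assoc] at hD ⊢
  linarith

end
end

section
/- Let (X, δ) be a diversity and let δ̂ be a function on finite subsets of T_X making (T_X, δ̂) a diversity and satisfying δ̂(κ(Y) ∪ {f}) = f(Y) for all finite Y ⊆ X and all f ∈ T_X. Then δ̂(F) ≥ δ_T(F) for every finite F ⊆ T_X. -/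
/-!
For each `A` in a collection `𝓐` pick `g_A ∈ F` attaining `inf_{f ∈ F} f(A)`. The hypothesis on `δ̂`
gives `δ̂({g_A} ∪ κ(A)) = g_A(A)`, and, applied to `f = h_y` with `y ∈ Y`, `δ̂(κ(Y)) = δ(Y)`.
Each `{g_A} ∪ κ(A)` meets `F`, so repeated triangle inequalities through `g_A` give
`δ̂(F ∪ ⋃_A ({g_A} ∪ κ(A))) ≤ δ̂(F) + Σ_A g_A(A)`, and by monotonicity the left side dominates
`δ̂(κ(⋃𝓐)) = δ(⋃𝓐)`.
-/

open scoped Classical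

noncomputable section

/-- The function `δ_T` on finite subsets of the tight span: `δ_T ∅ = 0` and for nonempty `F`,
`δ_T F = sup { δ(⋃𝓐) - Σ_{A ∈ 𝓐} inf_{f ∈ F} f A : 𝓐 a finite collection of finite subsets }`. -/
noncomputable def deltaT {X : Type*} (δ : Finset X → ℝ) (F : Finset (Finset X → ℝ)) : ℝ :=
  if F = ∅ then 0
  else sSup {r : ℝ | ∃ 𝓐 : Finset (Finset X),
    r = δ (𝓐.sup id) - ∑ A ∈ 𝓐, sInf ((fun f => f A) '' (F : Set (Finset X → ℝ)))}

/-- The Kuratowski-type map `κ` sends `x` to the function `h_x : A ↦ δ (A ∪ {x})`. -/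
def hfun {X : Type*} (δ : Finset X → ℝ) (x : X) : Finset X → ℝ :=
  fun A => δ (A ∪ {x})

def TriangleOn {Y : Type*} (d : Finset Y → ℝ) (P : Y → Prop) : Prop :=
  ∀ A B C : Finset Y, (∀ y ∈ A ∪ B ∪ C, P y) → B ≠ ∅ → d (A ∪ C) ≤ d (A ∪ B) + d (B ∪ C)

namespace TriangleOn

variable {Y : Type*} {d : Finset Y → ℝ} {P : Y → Prop}

theorem union_le_add_of_mem (h : TriangleOn d P) {G B : Finset Y} (hG : ∀ y ∈ G, P y)
    (hB : ∀ y ∈ B, P y) {p : Y} (hpG : p ∈ G) (hpB : p ∈ B) :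
    d (G ∪ B) ≤ d G + d B := by
  have key := h G {p} B (by aesop) (by simp)
  have hGp : G ∪ {p} = G := Finset.union_eq_left.mpr (Finset.singleton_subset_iff.mpr hpG)
  have hpB' : {p} ∪ B = B := Finset.union_eq_right.mpr (Finset.singleton_subset_iff.mpr hpB)
  rwa [hGp, hpB'] at key

theorem le_insert (h : TriangleOn d P) {S : Finset Y} (hS : ∀ y ∈ S, P y) {b : Y} (hb : P b)
    (hb₀ : d {b} = 0) : d S ≤ d (insert b S) := by
  have key := h S {b} ∅ (by aesop) (by simp)
  rw [Finset.union_empty, Finset.union_empty, hb₀, Finset.union_comm] at key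
  simpa using key

theorem mono (h : TriangleOn d P) (h₀ : ∀ b, P b → d {b} = 0) {S T : Finset Y} (hST : S ⊆ T)
    (hT : ∀ y ∈ T, P y) : d S ≤ d T := by
  obtain ⟨B, rfl⟩ : ∃ B, T = S ∪ B := ⟨T \ S, (Finset.union_sdiff_of_subset hST).symm⟩
  clear hST
  induction B using Finset.induction_on with
  | empty => simp
  | insert b B _ ih =>
    rw [Finset.union_insert] at hT ⊢
    exact (ih fun y hy => hT y (Finset.mem_insert_of_mem hy)).trans
      (h.le_insert (fun y hy => hT y (Finset.mem_insert_of_mem hy)) (hT b (by simp))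
        (h₀ b (hT b (by simp))))

theorem union_sup_le_add_sum {ι : Type*} (h : TriangleOn d P) {G : Finset Y}
    (hG : ∀ y ∈ G, P y) (I : Finset ι) {b : ι → Finset Y} (hb : ∀ i ∈ I, ∀ y ∈ b i, P y)
    (hmeet : ∀ i ∈ I, ∃ p ∈ b i, p ∈ G) :
    d (G ∪ I.sup b) ≤ d G + ∑ i ∈ I, d (b i) := by
  induction I using Finset.induction_on with
  | empty => simp
  | insert i I hi ih =>
    obtain ⟨p, hpb, hpG⟩ := hmeet i (by simp)
    have hGI : ∀ y ∈ G ∪ I.sup b, P y := by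
      simp only [Finset.mem_union, Finset.mem_sup]
      rintro y (hy | ⟨j, hj, hy⟩)
      exacts [hG y hy, hb j (Finset.mem_insert_of_mem hj) y hy]
    calc d (G ∪ (insert i I).sup b) = d ((G ∪ I.sup b) ∪ b i) := by
          rw [Finset.sup_insert, Finset.sup_eq_union, Finset.union_comm (b i),
            Finset.union_assoc]
      _ ≤ d (G ∪ I.sup b) + d (b i) :=
          h.union_le_add_of_mem hGI (hb i (by simp)) (Finset.mem_union_left _ hpG) hpb
      _ ≤ d G + ∑ j ∈ I, d (b j) + d (b i) := by
          gcongr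
          exact ih (fun j hj => hb j (Finset.mem_insert_of_mem hj))
            (fun j hj => hmeet j (Finset.mem_insert_of_mem hj))
      _ = d G + ∑ j ∈ insert i I, d (b j) := by rw [Finset.sum_insert hi]; ring

end TriangleOn

theorem MemP.nonneg_s8 {X : Type*} {δ : Finset X → ℝ} (hδ : IsDiversity δ) {f : Finset X → ℝ}
    (hf : MemP δ f) (A : Finset X) : 0 ≤ f A :=
  (hδ.1 A).trans (by simpa using hf.2 {A})

namespace IsDiversity

variable {X : Type*} {δ : Finset X → ℝ}

theorem singleton (hδ : IsDiversity δ) (x : X) : δ {x} = 0 := (hδ.2.1 {x}).mpr (by simp)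

theorem triangleOn (hδ : IsDiversity δ) : TriangleOn δ fun _ => True :=
  fun A B C _ hB => hδ.2.2 A B C hB

theorem mono (hδ : IsDiversity δ) {S T : Finset X} (hST : S ⊆ T) : δ S ≤ δ T :=
  hδ.triangleOn.mono (fun b _ => hδ.singleton b) hST fun _ _ => trivial

theorem memP_hfun (hδ : IsDiversity δ) (x : X) : MemP δ (hfun δ x) := by
  refine ⟨by simpa [hfun] using hδ.singleton x, fun 𝓐 => ?_⟩
  have hsub : 𝓐.sup id ⊆ {x} ∪ 𝓐.sup (· ∪ {x}) := by
    intro y hy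
    obtain ⟨A, hA, hyA⟩ := Finset.mem_sup.mp hy
    exact Finset.mem_union_right _ (Finset.mem_sup.mpr ⟨A, hA, Finset.mem_union_left _ hyA⟩)
  calc δ (𝓐.sup id) ≤ δ ({x} ∪ 𝓐.sup (· ∪ {x})) := hδ.mono hsub
    _ ≤ δ {x} + ∑ A ∈ 𝓐, δ (A ∪ {x}) :=
        hδ.triangleOn.union_sup_le_add_sum (fun _ _ => trivial) 𝓐 (fun _ _ _ _ => trivial)
          fun A _ => ⟨x, by simp, by simp⟩
    _ = ∑ A ∈ 𝓐, hfun δ x A := by rw [hδ.singleton, zero_add]; rfl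

theorem memT_hfun (hδ : IsDiversity δ) (x : X) : MemT δ (hfun δ x) := by
  refine ⟨hδ.memP_hfun x, fun g hg hle => funext fun A => le_antisymm (hle A) ?_⟩
  have hgx : g {x} = 0 :=
    le_antisymm (by simpa [hfun, hδ.singleton] using hle {x}) (hg.nonneg_s8 hδ {x})
  by_cases hA : A = {x}
  · subst hA
    simpa [hfun, hδ.singleton] using hg.nonneg_s8 hδ {x}
  · simpa [Finset.sum_pair hA, hgx, hfun] using hg.2 {A, {x}}

end IsDiversity

section TightSpanExtension

variable {X : Type*} {δ : Finset X → ℝ} {δhat : Finset (Finset X → ℝ) → ℝ}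

theorem le_deltaHat_of_image_hfun_subset (hδ : IsDiversity δ)
    (hnonneg : ∀ F : Finset (Finset X → ℝ), (∀ f ∈ F, MemT δ f) → 0 ≤ δhat F)
    (htri : TriangleOn δhat (MemT δ))
    (hκ : ∀ (Y : Finset X) (f : Finset X → ℝ), MemT δ f →
      δhat (insert f (Y.image (hfun δ))) = f Y)
    {Y : Finset X} {S : Finset (Finset X → ℝ)} (hYS : Y.image (hfun δ) ⊆ S)
    (hS : ∀ f ∈ S, MemT δ f) : δ Y ≤ δhat S := by
  obtain rfl | ⟨y, hy⟩ := Y.eq_empty_or_nonempty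
  · simpa [(hδ.2.1 ∅).mpr (by simp)] using hnonneg S hS
  have hκY : δhat (Y.image (hfun δ)) = δ Y := by
    have key := hκ Y (hfun δ y) (hδ.memT_hfun y)
    rwa [Finset.insert_eq_self.mpr (Finset.mem_image_of_mem _ hy), hfun,
      Finset.union_eq_left.mpr (by simpa using hy)] at key
  rw [← hκY]
  -- singletons vanish: `δ̂ {f} = f ∅ = 0`
  exact htri.mono (fun f hf => by simpa [hf.1.1] using hκ ∅ f hf) hYS hS

theorem sup_le_deltaHat_add_sum (hδ : IsDiversity δ)
    (hnonneg : ∀ F : Finset (Finset X → ℝ), (∀ f ∈ F, MemT δ f) → 0 ≤ δhat F)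
    (htri : TriangleOn δhat (MemT δ))
    (hκ : ∀ (Y : Finset X) (f : Finset X → ℝ), MemT δ f →
      δhat (insert f (Y.image (hfun δ))) = f Y)
    {F : Finset (Finset X → ℝ)} (hF : ∀ f ∈ F, MemT δ f) (𝓐 : Finset (Finset X))
    {g : Finset X → Finset X → ℝ} (hg : ∀ A ∈ 𝓐, g A ∈ F) :
    δ (𝓐.sup id) ≤ δhat F + ∑ A ∈ 𝓐, g A A := by
  set b : Finset X → Finset (Finset X → ℝ) := fun A => insert (g A) (A.image (hfun δ))
  have hb : ∀ A ∈ 𝓐, ∀ f ∈ b A, MemT δ f := by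
    simp only [b, Finset.forall_mem_insert, Finset.forall_mem_image]
    exact fun A hA => ⟨hF _ (hg A hA), fun x _ => hδ.memT_hfun x⟩
  have hFb : ∀ f ∈ F ∪ 𝓐.sup b, MemT δ f := by
    simp only [Finset.mem_union, Finset.mem_sup]
    rintro f (hf | ⟨A, hA, hf⟩)
    exacts [hF f hf, hb A hA f hf]
  have hsub : (𝓐.sup id).image (hfun δ) ⊆ F ∪ 𝓐.sup b := by
    simp only [Finset.subset_iff, Finset.mem_image, Finset.mem_sup, id]
    rintro _ ⟨x, ⟨A, hA, hx⟩, rfl⟩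
    exact Finset.mem_union_right _
      (Finset.mem_sup.mpr ⟨A, hA, Finset.mem_insert_of_mem (Finset.mem_image_of_mem _ hx)⟩)
  calc δ (𝓐.sup id) ≤ δhat (F ∪ 𝓐.sup b) :=
        le_deltaHat_of_image_hfun_subset hδ hnonneg htri hκ hsub hFb
    _ ≤ δhat F + ∑ A ∈ 𝓐, δhat (b A) :=
        htri.union_sup_le_add_sum hF 𝓐 hb fun A hA => ⟨g A, by simp [b], hg A hA⟩
    _ = δhat F + ∑ A ∈ 𝓐, g A A := by
        congr 1
        exact Finset.sum_congr rfl fun A hA => hκ A (g A) (hF _ (hg A hA))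

end TightSpanExtension

theorem deltaT_minimal_general {X : Type*} (δ : Finset X → ℝ) (hδ : IsDiversity δ)
    (δhat : Finset (Finset X → ℝ) → ℝ)
    (h1 : ∀ F : Finset (Finset X → ℝ), (∀ f ∈ F, MemT δ f) → 0 ≤ δhat F)
    (h3 : ∀ F G H : Finset (Finset X → ℝ), (∀ f ∈ F ∪ G ∪ H, MemT δ f) → G ≠ ∅ →
      δhat (F ∪ H) ≤ δhat (F ∪ G) + δhat (G ∪ H))
    (h4 : ∀ (Y : Finset X) (f : Finset X → ℝ), MemT δ f →
      δhat (insert f (Y.image (hfun δ))) = f Y) :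
    ∀ F : Finset (Finset X → ℝ), (∀ f ∈ F, MemT δ f) → deltaT δ F ≤ δhat F := by
  intro F hF
  unfold deltaT
  split_ifs with hFe
  · subst hFe
    exact h1 ∅ (by simp)
  have hFne : F.Nonempty := Finset.nonempty_iff_ne_empty.mpr hFe
  have hmin : ∀ A : Finset X,
      ∃ f ∈ F, sInf ((fun f => f A) '' (F : Set (Finset X → ℝ))) = f A := fun A => by
    simpa only [← Finset.inf'_eq_csInf_image F hFne] using Finset.exists_mem_eq_inf' hFne _
  choose g hgF hg using hmin
  refine csSup_le ⟨_, ∅, rfl⟩ ?_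
  rintro r ⟨𝓐, rfl⟩
  simpa only [hg, sub_le_iff_le_add] using
    sup_le_deltaHat_add_sum hδ h1 h3 h4 hF 𝓐 fun A _ => hgF A

/-- if `δ̂` makes `T_X` a diversity and satisfies
`δ̂ (κ(Y) ∪ {f}) = f Y` for all finite `Y ⊆ X` and `f ∈ T_X`, then `δ̂ F ≥ δ_T F`
for every finite `F ⊆ T_X`. -/
theorem deltaT_minimal {X : Type*} (δ : Finset X → ℝ) (hδ : IsDiversity δ)
    (δhat : Finset (Finset X → ℝ) → ℝ)
    (h1 : ∀ F : Finset (Finset X → ℝ), (∀ f ∈ F, MemT δ f) → 0 ≤ δhat F)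
    (h2 : ∀ F : Finset (Finset X → ℝ), (∀ f ∈ F, MemT δ f) → (δhat F = 0 ↔ F.card ≤ 1))
    (h3 : ∀ F G H : Finset (Finset X → ℝ), (∀ f ∈ F ∪ G ∪ H, MemT δ f) → G ≠ ∅ →
      δhat (F ∪ H) ≤ δhat (F ∪ G) + δhat (G ∪ H))
    (h4 : ∀ (Y : Finset X) (f : Finset X → ℝ), MemT δ f →
      δhat (insert f (Y.image (hfun δ))) = f Y) :
    ∀ F : Finset (Finset X → ℝ), (∀ f ∈ F, MemT δ f) → deltaT δ F ≤ δhat F :=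
  deltaT_minimal_general δ hδ δhat h1 h3 h4
end
end

section
/- For any diversity (X, δ), the tight span (T_X, δ_T) is hyperconvex: for every function r from finite subsets of T_X to ℝ such that Σ_{F ∈ 𝓕} r(F) ≥ δ_T(⋃_{F ∈ 𝓕} F) for all finite collections 𝓕 of finite subsets of T_X, there exists g ∈ T_X with δ_T(G ∪ {g}) ≤ r(G) for all finite G ⊆ T_X. -/
open scoped Classical

noncomputable section

/-!
Restricted to finite subsets of `T_X` and set to `0` at `∅`, `r` lies in `P` of the diversity
`(T_X, δ_T)`, so by Zorn's lemma it dominates a minimal `h`. Since the Kuratowski embedding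
`κ a = δ({a} ∪ ·)` is an isometry, `A ↦ h (κ A)` lies in `P_X` and dominates some `g ∈ T_X`.
For finite `G ⊆ T_X` we get `δ_T (G ∪ {g}) ≤ h G ≤ r G`: split a collection `𝓐` according to
whether `g` or `G` realises the infimum; the part `𝓐₂` won by `G` costs at most
`g (⋃𝓐₂) ≤ h (κ (⋃𝓐₂))`, and by minimality of `h` this is nearly `δ_T (κ (⋃𝓐₂) ∪ W) - Σ h`,
in which the points `κ (⋃𝓐₂)` can be traded for `G` at the price `Σ_{A ∈ 𝓐₂} inf_G A`.
-/

theorem Finset.sum_union_le_of_nonneg {ι : Type*} [DecidableEq ι] {f : ι → ℝ}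
    (hf : ∀ i, 0 ≤ f i) (s t : Finset ι) : ∑ i ∈ s ∪ t, f i ≤ ∑ i ∈ s, f i + ∑ i ∈ t, f i := by
  rw [← Finset.sum_union_inter]
  exact le_add_of_nonneg_right (Finset.sum_nonneg fun i _ => hf i)

section MinimalElements

variable {Y : Type*} {D : Finset Y → ℝ} {f : Finset Y → ℝ}

theorem MemP.le_apply (hf : MemP D f) (A : Finset Y) : D A ≤ f A := by
  simpa using hf.2 {A}

theorem MemP.nonneg_s11 (hD : ∀ A, 0 ≤ D A) (hf : MemP D f) (A : Finset Y) : 0 ≤ f A :=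
  (hD A).trans (hf.le_apply A)

theorem MemP.le_add_sum (hD : ∀ A, 0 ≤ D A) (hf : MemP D f) (A : Finset Y)
    (𝓑 : Finset (Finset Y)) : D (A ∪ 𝓑.sup id) ≤ f A + ∑ B ∈ 𝓑, f B := by
  have h := hf.2 (insert A 𝓑)
  rw [Finset.sup_insert, Finset.insert_eq] at h
  exact h.trans (by simpa using Finset.sum_union_le_of_nonneg (hf.nonneg_s11 hD) {A} 𝓑)

theorem memP_iInf_of_isChain {c : Set (Finset Y → ℝ)}
    (hc : IsChain (· ≤ ·) c) (hne : c.Nonempty) (hcP : ∀ p ∈ c, MemP D p) :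
    MemP D (fun A => ⨅ p : c, p.1 A) := by
  have := hne.to_subtype
  refine ⟨by simp [fun p : c => (hcP p.1 p.2).1], fun 𝓐 => ?_⟩
  refine le_of_forall_pos_le_add fun ε hε => ?_
  set η := ε / (𝓐.card + 1)
  have hη : 0 < η := by positivity
  choose p hp using fun A => exists_lt_of_ciInf_lt (lt_add_of_pos_right (⨅ p : c, p.1 A) hη)
  obtain ⟨q, hq⟩ :=
    (show IsChain (· ≥ ·) c from hc.symm).directedOn.directed_val.finset_le (𝓐.image p)
  calc D (𝓐.sup id) ≤ ∑ A ∈ 𝓐, q.1 A := (hcP q.1 q.2).2 𝓐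
    _ ≤ ∑ A ∈ 𝓐, ((⨅ p : c, p.1 A) + η) := Finset.sum_le_sum fun A hA =>
        ((hq (p A) (Finset.mem_image_of_mem p hA)) A).trans (hp A).le
    _ ≤ ∑ A ∈ 𝓐, (⨅ p : c, p.1 A) + ε := by
        rw [Finset.sum_add_distrib, Finset.sum_const, nsmul_eq_mul]
        gcongr
        rw [mul_div_assoc', div_le_iff₀ (by positivity)]
        nlinarith

theorem MemP.exists_memT_le (hD : ∀ A, 0 ≤ D A) (hf : MemP D f) : ∃ g, MemT D g ∧ g ≤ f := by
  let S : Set (Finset Y → ℝ) := {p | MemP D p ∧ p ≤ f}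
  have hchain : ∀ c ⊆ S, IsChain (· ≥ ·) c → ∀ p ∈ c, ∃ lb ∈ S, ∀ q ∈ c, lb ≤ q := by
    intro c hcS hc p hp
    have hbdd : ∀ A, BddBelow (Set.range fun q : c => q.1 A) := fun A =>
      ⟨0, Set.forall_mem_range.2 fun q => (hcS q.2).1.nonneg_s11 hD A⟩
    exact ⟨fun A => ⨅ q : c, q.1 A,
      ⟨memP_iInf_of_isChain hc.symm ⟨p, hp⟩ fun q hq => (hcS hq).1,
        fun A => (ciInf_le (hbdd A) ⟨p, hp⟩).trans ((hcS hp).2 A)⟩,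
      fun q hq A => ciInf_le (hbdd A) ⟨q, hq⟩⟩
  obtain ⟨g, hgf, hg⟩ := zorn_le_nonempty₀ (α := (Finset Y → ℝ)ᵒᵈ) S hchain f ⟨hf, le_rfl⟩
  exact ⟨g, ⟨hg.prop.1, fun g' hg' hg'g =>
    le_antisymm hg'g (hg.2 ⟨hg', fun A => (hg'g A).trans (hg.prop.2 A)⟩ hg'g)⟩, hgf⟩

theorem MemT.exists_sub_le (hD₀ : D ∅ = 0) (hf : MemT D f) (A : Finset Y) {ε : ℝ}
    (hε : 0 < ε) :
    ∃ 𝓑 : Finset (Finset Y), f A - ε ≤ D (A ∪ 𝓑.sup id) - ∑ B ∈ 𝓑, f B := by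
  rcases eq_or_ne A ∅ with rfl | hA
  · exact ⟨∅, by simp [hf.1.1, hD₀, hε.le]⟩
  -- otherwise `f`, lowered by `ε` at `A`, would still lie in `P`
  by_contra! hlow
  have hP : MemP D (Function.update f A (f A - ε)) := by
    refine ⟨by simp [hA.symm, hf.1.1], fun 𝓐 => ?_⟩
    by_cases hA𝓐 : A ∈ 𝓐
    · have h := hlow (𝓐.erase A)
      have e : A ∪ (𝓐.erase A).sup id = 𝓐.sup id := by
        conv_rhs => rw [← Finset.insert_erase hA𝓐, Finset.sup_insert]
        rfl
      rw [e] at h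
      rw [Finset.sum_update_of_mem hA𝓐, ← Finset.erase_eq]
      linarith
    · rw [Finset.sum_update_of_notMem hA𝓐]
      exact hf.1.2 𝓐
  have h := congrFun (hf.2 _ hP (update_le_self_iff.2 (by linarith))) A
  simp only [Function.update_self] at h
  linarith

end MinimalElements

section Diversity

variable {X : Type*} {δ : Finset X → ℝ}

theorem IsDiversity.eq_zero_of_card_le_one (hδ : IsDiversity δ) {A : Finset X}
    (hA : A.card ≤ 1) : δ A = 0 :=
  (hδ.2.1 A).2 hA

theorem IsDiversity.union_le (hδ : IsDiversity δ) {A C : Finset X} {x : X} (hxA : x ∈ A)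
    (hxC : x ∈ C) : δ (A ∪ C) ≤ δ A + δ C := by
  simpa [Finset.union_eq_left.2 (Finset.singleton_subset_iff.2 hxA),
    Finset.union_eq_right.2 (Finset.singleton_subset_iff.2 hxC)] using hδ.2.2 A {x} C (by simp)

theorem IsDiversity.le_insert (hδ : IsDiversity δ) (a : X) (A : Finset X) :
    δ A ≤ δ (insert a A) := by
  have ha : δ {a} = 0 := hδ.eq_zero_of_card_le_one (by simp)
  have h := hδ.2.2 A {a} ∅ (by simp)
  rwa [Finset.union_empty, Finset.union_empty, ha, add_zero, Finset.union_comm,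
    ← Finset.insert_eq] at h

theorem IsDiversity.monotone (hδ : IsDiversity δ) : Monotone δ := by
  intro A B hAB
  rw [← Finset.union_sdiff_of_subset hAB]
  induction B \ A using Finset.induction_on with
  | empty => simp
  | insert a s _ ih => exact ih.trans (by rw [Finset.union_insert]; exact hδ.le_insert a _)

theorem IsDiversity.union_sup_le (hδ : IsDiversity δ) {ι : Type*} (s : Finset ι)
    (V : ι → Finset X) {W : Finset X} (hW : ∀ i ∈ s, (W ∩ V i).Nonempty) :
    δ (W ∪ s.sup V) ≤ δ W + ∑ i ∈ s, δ (V i) := by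
  induction s using Finset.induction_on with
  | empty => simp
  | insert i s hi ih =>
    obtain ⟨x, hx⟩ := hW i (Finset.mem_insert_self i s)
    rw [Finset.mem_inter] at hx
    rw [Finset.sup_insert, Finset.sup_eq_union, ← Finset.union_assoc, Finset.union_right_comm,
      Finset.sum_insert hi]
    have := ih fun j hj => hW j (Finset.mem_insert_of_mem hj)
    have := hδ.union_le (Finset.mem_union_left (s.sup V) hx.1) hx.2
    linarith

def kuratowski (δ : Finset X → ℝ) (a : X) : Finset X → ℝ := fun B => δ (insert a B)

theorem memP_kuratowski (hδ : IsDiversity δ) (a : X) : MemP δ (kuratowski δ a) := by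
  refine ⟨hδ.eq_zero_of_card_le_one (by simp), fun 𝓐 => ?_⟩
  calc δ (𝓐.sup id) ≤ δ ({a} ∪ 𝓐.sup (insert a)) :=
        hδ.monotone fun x hx => by
          obtain ⟨A, hA, hxA⟩ := Finset.mem_sup.1 hx
          exact Finset.mem_union_right _
            (Finset.mem_sup.2 ⟨A, hA, Finset.mem_insert_of_mem hxA⟩)
    _ ≤ δ {a} + ∑ A ∈ 𝓐, δ (insert a A) :=
        hδ.union_sup_le 𝓐 _ fun A _ => ⟨a, by simp⟩
    _ = ∑ A ∈ 𝓐, kuratowski δ a A := by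
        rw [hδ.eq_zero_of_card_le_one (by simp), zero_add]; rfl

theorem memT_kuratowski (hδ : IsDiversity δ) (a : X) : MemT δ (kuratowski δ a) := by
  refine ⟨memP_kuratowski hδ a, fun h hh hle => le_antisymm hle fun B => ?_⟩
  have ha : h {a} = 0 :=
    le_antisymm ((hle {a}).trans_eq (hδ.eq_zero_of_card_le_one (by simp))) (hh.nonneg_s11 hδ.1 _)
  have h := hh.le_add_sum hδ.1 B {{a}}
  rwa [Finset.sup_singleton, Finset.sum_singleton, ha, add_zero, id, Finset.union_comm,
    ← Finset.insert_eq] at h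

theorem kuratowski_injective (hδ : IsDiversity δ) : Function.Injective (kuratowski δ) := by
  intro a b hab
  have h := congrFun hab {a}
  simp only [kuratowski, Finset.insert_eq_of_mem (Finset.mem_singleton_self a),
    hδ.eq_zero_of_card_le_one (Finset.card_singleton a).le] at h
  exact Finset.card_le_one.1 ((hδ.2.1 _).1 h.symm) a (by simp) b (by simp)

end Diversity

section DeltaT

variable {X : Type*} {δ : Finset X → ℝ} {F : Finset (Finset X → ℝ)}

/-- `inf_{f ∈ F} f A` as in `deltaT`; it is `sInf ∅ = 0` for empty `F`. -/
def infAt (F : Finset (Finset X → ℝ)) (A : Finset X) : ℝ :=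
  sInf ((fun f => f A) '' (F : Set (Finset X → ℝ)))

theorem infAt_le {f : Finset X → ℝ} (hf : f ∈ F) (A : Finset X) : infAt F A ≤ f A :=
  csInf_le ((F.finite_toSet.image _).bddBelow) ⟨f, hf, rfl⟩

theorem exists_infAt_eq (hF : F.Nonempty) (A : Finset X) : ∃ f ∈ F, infAt F A = f A := by
  obtain ⟨f, hf, h⟩ :=
    (((Finset.coe_nonempty.2 hF).image _).csInf_mem (F.finite_toSet.image _) :
      infAt F A ∈ (fun f => f A) '' (F : Set (Finset X → ℝ)))
  exact ⟨f, hf, h.symm⟩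

theorem infAt_nonneg (hδ : IsDiversity δ) (hFP : ∀ f ∈ F, MemP δ f) (A : Finset X) :
    0 ≤ infAt F A :=
  Real.sInf_nonneg (by rintro _ ⟨f, hf, rfl⟩; exact (hFP f hf).nonneg_s11 hδ.1 A)

theorem infAt_anti {F' : Finset (Finset X → ℝ)} (hF : F.Nonempty) (hFF' : F ⊆ F')
    (A : Finset X) : infAt F' A ≤ infAt F A := by
  obtain ⟨f, hf, hfA⟩ := exists_infAt_eq hF A
  exact hfA ▸ infAt_le (hFF' hf) A

theorem infAt_insert (hF : F.Nonempty) (g : Finset X → ℝ) (A : Finset X) :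
    infAt (insert g F) A = min (g A) (infAt F A) := by
  rw [infAt, Finset.coe_insert, Set.image_insert_eq,
    csInf_insert ((F.finite_toSet.image _).bddBelow) ((Finset.coe_nonempty.2 hF).image _)]
  rfl

theorem infAt_singleton (g : Finset X → ℝ) (A : Finset X) : infAt {g} A = g A := by
  simp [infAt]

theorem deltaT_le {c : ℝ} (hc : 0 ≤ c)
    (h : F.Nonempty → ∀ 𝓐 : Finset (Finset X), δ (𝓐.sup id) - ∑ A ∈ 𝓐, infAt F A ≤ c) :
    deltaT δ F ≤ c := by
  rw [deltaT]
  split_ifs with hF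
  · exact hc
  · exact csSup_le ⟨_, ∅, rfl⟩ fun _ ⟨𝓐, h𝓐⟩ =>
      h𝓐 ▸ h (Finset.nonempty_iff_ne_empty.2 hF) 𝓐

theorem deltaT_nonneg (hδ : IsDiversity δ) (F : Finset (Finset X → ℝ)) : 0 ≤ deltaT δ F := by
  rw [deltaT]
  split_ifs
  · exact le_rfl
  by_cases hbdd : BddAbove {r : ℝ | ∃ 𝓐 : Finset (Finset X),
      r = δ (𝓐.sup id) - ∑ A ∈ 𝓐, sInf ((fun f => f A) '' (F : Set (Finset X → ℝ)))}
  · exact le_csSup hbdd ⟨∅, by simpa using (hδ.eq_zero_of_card_le_one (by simp)).symm⟩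
  · rw [Real.sSup_of_not_bddAbove hbdd]

/-- The bound that makes the supremum defining `deltaT` finite: group `𝓐` by an `f ∈ F`
realising the infimum and glue the groups at `x₀`. -/
theorem le_sum_add_sum_infAt (hδ : IsDiversity δ) (x₀ : X) (hF : F.Nonempty)
    (hFP : ∀ f ∈ F, MemP δ f) (𝓐 : Finset (Finset X)) :
    δ (𝓐.sup id) ≤ ∑ f ∈ F, f {x₀} + ∑ A ∈ 𝓐, infAt F A := by
  choose φ hφF hφ using exists_infAt_eq hF
  let U : (Finset X → ℝ) → Finset X := fun f => (𝓐.filter (φ · = f)).sup id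
  calc δ (𝓐.sup id) ≤ δ ({x₀} ∪ F.sup fun f => {x₀} ∪ U f) := hδ.monotone fun x hx => by
        obtain ⟨A, hA, hxA⟩ := Finset.mem_sup.1 hx
        refine Finset.mem_union_right _ (Finset.mem_sup.2 ⟨φ A, hφF A, ?_⟩)
        exact Finset.mem_union_right _
          (Finset.mem_sup.2 ⟨A, Finset.mem_filter.2 ⟨hA, rfl⟩, hxA⟩)
    _ ≤ δ {x₀} + ∑ f ∈ F, δ ({x₀} ∪ U f) := hδ.union_sup_le F _ fun f _ => ⟨x₀, by simp⟩
    _ ≤ ∑ f ∈ F, (f {x₀} + ∑ A ∈ 𝓐 with φ A = f, f A) := by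
        rw [hδ.eq_zero_of_card_le_one (by simp), zero_add]
        exact Finset.sum_le_sum fun f hf => (hFP f hf).le_add_sum hδ.1 _ _
    _ = ∑ f ∈ F, f {x₀} + ∑ A ∈ 𝓐, infAt F A := by
        rw [Finset.sum_add_distrib, ← Finset.sum_fiberwise_of_maps_to (fun A _ => hφF A)]
        congr 1
        refine Finset.sum_congr rfl fun f _ => Finset.sum_congr rfl fun A hA => ?_
        rw [hφ, (Finset.mem_filter.1 hA).2]

theorem le_deltaT_add_sum (hδ : IsDiversity δ) (hF : F.Nonempty) (hFP : ∀ f ∈ F, MemP δ f)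
    (𝓐 : Finset (Finset X)) : δ (𝓐.sup id) ≤ deltaT δ F + ∑ A ∈ 𝓐, infAt F A := by
  have hbdd : BddAbove {r : ℝ | ∃ 𝓐 : Finset (Finset X),
      r = δ (𝓐.sup id) - ∑ A ∈ 𝓐, infAt F A} := by
    rcases isEmpty_or_nonempty X with hX | ⟨⟨x₀⟩⟩
    · refine ⟨0, fun _ ⟨𝓐, h𝓐⟩ => ?_⟩
      rw [h𝓐, Finset.eq_empty_of_isEmpty (𝓐.sup id), hδ.eq_zero_of_card_le_one (by simp),
        zero_sub, neg_nonpos]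
      exact Finset.sum_nonneg fun A _ => infAt_nonneg hδ hFP A
    · exact ⟨_, fun _ ⟨𝓐, h𝓐⟩ =>
        h𝓐 ▸ sub_le_iff_le_add.2 (le_sum_add_sum_infAt hδ x₀ hF hFP 𝓐)⟩
  rw [deltaT, if_neg hF.ne_empty, ← sub_le_iff_le_add]
  exact le_csSup hbdd ⟨𝓐, rfl⟩

theorem le_deltaT_image_kuratowski (hδ : IsDiversity δ) (S : Finset X) :
    δ S ≤ deltaT δ (S.image (kuratowski δ)) := by
  rcases S.eq_empty_or_nonempty with rfl | hS
  · rw [hδ.eq_zero_of_card_le_one (by simp)]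
    exact deltaT_nonneg hδ _
  have hK : ∀ f ∈ S.image (kuratowski δ), MemP δ f := by
    simp only [Finset.mem_image]
    rintro _ ⟨a, -, rfl⟩
    exact memP_kuratowski hδ a
  have h := le_deltaT_add_sum hδ (hS.image _) hK (S.image ({·}))
  have hsup : (S.image ({·})).sup id = S := by ext; simp
  have hsum : ∑ B ∈ S.image ({·}), infAt (S.image (kuratowski δ)) B ≤ 0 := by
    refine Finset.sum_nonpos fun B hB => ?_
    obtain ⟨a, ha, rfl⟩ := Finset.mem_image.1 hB
    exact (infAt_le (Finset.mem_image_of_mem _ ha) _).trans_eq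
      (hδ.eq_zero_of_card_le_one (by simp))
  rw [hsup] at h
  linarith

theorem deltaT_image_kuratowski_union_le (hδ : IsDiversity δ) {W F : Finset (Finset X → ℝ)}
    (hF : F.Nonempty) (hFP : ∀ f ∈ F, MemP δ f) (hWF : W ⊆ F) (𝓑 : Finset (Finset X)) :
    deltaT δ ((𝓑.sup id).image (kuratowski δ) ∪ W) ≤ deltaT δ F + ∑ B ∈ 𝓑, infAt F B := by
  set S := 𝓑.sup id
  set K := S.image (kuratowski δ) ∪ W
  refine deltaT_le (add_nonneg (deltaT_nonneg hδ F)
    (Finset.sum_nonneg fun B _ => infAt_nonneg hδ hFP B)) fun hK 𝓒 => ?_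
  let 𝓒₁ := 𝓒.filter fun C => ∃ c ∈ S, infAt K C = δ (insert c C)
  let 𝓒₂ := 𝓒.filter fun C => ¬∃ c ∈ S, infAt K C = δ (insert c C)
  -- on `𝓒₁` the infimum is realised by some `κ c` with `c ∈ S`, so these sets glue onto `S`
  choose c hcS hc using fun C : 𝓒₁ => (Finset.mem_filter.1 C.2).2
  have h₂ : ∀ C ∈ 𝓒₂, infAt F C ≤ infAt K C := by
    intro C hC
    obtain ⟨f, hfK, hf⟩ := exists_infAt_eq hK C
    rcases Finset.mem_union.1 hfK with hfS | hfW
    · obtain ⟨a, ha, rfl⟩ := Finset.mem_image.1 hfS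
      exact absurd ⟨a, ha, hf⟩ (Finset.mem_filter.1 hC).2
    · exact hf ▸ infAt_le (hWF hfW) C
  have hS₂ : δ (S ∪ 𝓒₂.sup id) ≤ deltaT δ F + ∑ B ∈ 𝓑, infAt F B + ∑ C ∈ 𝓒₂, infAt K C :=
    calc δ (S ∪ 𝓒₂.sup id) = δ ((𝓑 ∪ 𝓒₂).sup id) := by rw [Finset.sup_union]; rfl
      _ ≤ deltaT δ F + ∑ B ∈ 𝓑 ∪ 𝓒₂, infAt F B := le_deltaT_add_sum hδ hF hFP _
      _ ≤ deltaT δ F + (∑ B ∈ 𝓑, infAt F B + ∑ C ∈ 𝓒₂, infAt F C) := by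
          gcongr
          exact Finset.sum_union_le_of_nonneg (infAt_nonneg hδ hFP) _ _
      _ ≤ _ := by
          rw [← add_assoc]
          gcongr with C hC
          exact h₂ C hC
  have hglue : δ (𝓒.sup id) ≤ δ (S ∪ 𝓒₂.sup id) + ∑ C ∈ 𝓒₁, infAt K C :=
    calc δ (𝓒.sup id) ≤ δ ((S ∪ 𝓒₂.sup id) ∪ 𝓒₁.attach.sup fun C => insert (c C) C) :=
          hδ.monotone fun x hx => by
            obtain ⟨C, hC, hxC⟩ := Finset.mem_sup.1 hx
            by_cases hC₁ : ∃ c ∈ S, infAt K C = δ (insert c C)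
            · exact Finset.mem_union_right _ (Finset.mem_sup.2
                ⟨⟨C, Finset.mem_filter.2 ⟨hC, hC₁⟩⟩, Finset.mem_attach _ _,
                  Finset.mem_insert_of_mem hxC⟩)
            · exact Finset.mem_union_left _ (Finset.mem_union_right _
                (Finset.mem_sup.2 ⟨C, Finset.mem_filter.2 ⟨hC, hC₁⟩, hxC⟩))
      _ ≤ δ (S ∪ 𝓒₂.sup id) + ∑ C ∈ 𝓒₁.attach, δ (insert (c C) C) :=
          hδ.union_sup_le _ _ fun C _ => ⟨c C, by simp [hcS C]⟩
      _ = δ (S ∪ 𝓒₂.sup id) + ∑ C ∈ 𝓒₁, infAt K C := by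
          rw [← Finset.sum_attach 𝓒₁, Finset.sum_congr rfl fun C _ => (hc C).symm]
  have hsplit := Finset.sum_filter_add_sum_filter_not 𝓒
    (fun C => ∃ c ∈ S, infAt K C = δ (insert c C)) (infAt K)
  linarith

end DeltaT

theorem Finset.map_sup_id {α β : Type*} (e : α ↪ β) (𝓐 : Finset (Finset α)) :
    (𝓐.sup id).map e = (𝓐.map (Finset.mapEmbedding e).toEmbedding).sup id := by
  rw [Finset.sup_map]
  induction 𝓐 using Finset.induction_on with
  | empty => simp
  | insert A 𝓐 _ ih => simp [Finset.map_union, ih]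

section TightSpan

open Function

variable {X : Type*} {δ : Finset X → ℝ}

abbrev TightSpan (δ : Finset X → ℝ) := {f : Finset X → ℝ // MemT δ f}

-- The classical instance rather than the subtype's, so that unions of finsets of `TightSpan δ`
-- written here agree with those produced by the general lemmas about `MemP` and `MemT`.
instance (δ : Finset X → ℝ) : DecidableEq (TightSpan δ) := Classical.decEq _

def TightSpan.diversity (δ : Finset X → ℝ) (F : Finset (TightSpan δ)) : ℝ :=
  deltaT δ (F.map (Embedding.subtype _))

theorem TightSpan.diversity_empty (δ : Finset X → ℝ) : TightSpan.diversity δ ∅ = 0 := by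
  simp [TightSpan.diversity, deltaT]

theorem TightSpan.diversity_nonneg (hδ : IsDiversity δ) (F : Finset (TightSpan δ)) :
    0 ≤ TightSpan.diversity δ F :=
  deltaT_nonneg hδ _

theorem memP_of_mem_map_subtype {F : Finset (TightSpan δ)} {f : Finset X → ℝ}
    (hf : f ∈ F.map (Embedding.subtype _)) : MemP δ f := by
  obtain ⟨g, -, rfl⟩ := Finset.mem_map.1 hf
  exact g.2.1

def kuratowskiEmb (hδ : IsDiversity δ) : X ↪ TightSpan δ :=
  ⟨fun a => ⟨kuratowski δ a, memT_kuratowski hδ a⟩,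
    fun _ _ h => kuratowski_injective hδ (congrArg Subtype.val h)⟩

theorem map_kuratowskiEmb (hδ : IsDiversity δ) (S : Finset X) :
    (S.map (kuratowskiEmb hδ)).map (Embedding.subtype _) = S.image (kuratowski δ) := by
  rw [Finset.map_map, Finset.map_eq_image]
  rfl

theorem MemT.apply_map_kuratowskiEmb_le (hδ : IsDiversity δ) {h : Finset (TightSpan δ) → ℝ}
    (hh : MemT (TightSpan.diversity δ) h) {G : Finset (TightSpan δ)} (hG : G.Nonempty)
    (𝓑 : Finset (Finset X)) :
    h ((𝓑.sup id).map (kuratowskiEmb hδ)) ≤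
      h G + ∑ B ∈ 𝓑, infAt (G.map (Embedding.subtype _)) B := by
  refine le_of_forall_pos_le_add fun ε hε => ?_
  obtain ⟨𝓖, h𝓖⟩ :=
    hh.exists_sub_le (TightSpan.diversity_empty δ) ((𝓑.sup id).map (kuratowskiEmb hδ)) hε
  set G' := G.map (Embedding.subtype (MemT δ))
  set W := (𝓖.sup id).map (Embedding.subtype (MemT δ))
  have hkey := deltaT_image_kuratowski_union_le hδ (F := G' ∪ W) (W := W)
    ((hG.map).mono Finset.subset_union_left)
    (fun f hf => (Finset.mem_union.1 hf).elim memP_of_mem_map_subtype memP_of_mem_map_subtype)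
    Finset.subset_union_right 𝓑
  have hinf : ∑ B ∈ 𝓑, infAt (G' ∪ W) B ≤ ∑ B ∈ 𝓑, infAt G' B :=
    Finset.sum_le_sum fun B _ => infAt_anti hG.map Finset.subset_union_left B
  have hG𝓖 := hh.1.le_add_sum (TightSpan.diversity_nonneg hδ) G 𝓖
  rw [TightSpan.diversity, Finset.map_union, map_kuratowskiEmb] at h𝓖
  rw [TightSpan.diversity, Finset.map_union] at hG𝓖
  linarith

theorem deltaT_insert_le (hδ : IsDiversity δ) {h : Finset (TightSpan δ) → ℝ}
    (hh : MemT (TightSpan.diversity δ) h) {g : Finset X → ℝ} (hg : MemP δ g)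
    (hgh : ∀ A, g A ≤ h (A.map (kuratowskiEmb hδ))) (G : Finset (TightSpan δ)) :
    deltaT δ (insert g (G.map (Embedding.subtype _))) ≤ h G := by
  rcases G.eq_empty_or_nonempty with rfl | hG
  · refine deltaT_le hh.1.1.ge fun _ 𝓐 => ?_
    simpa [infAt_singleton, hh.1.1] using hg.2 𝓐
  refine deltaT_le (hh.1.nonneg_s11 (TightSpan.diversity_nonneg hδ) G) fun _ 𝓐 => ?_
  set G' := G.map (Embedding.subtype (MemT δ))
  let 𝓐₁ := 𝓐.filter fun A => g A ≤ infAt G' A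
  let 𝓐₂ := 𝓐.filter fun A => ¬g A ≤ infAt G' A
  have hsum : ∑ A ∈ 𝓐, infAt (insert g G') A = ∑ A ∈ 𝓐₁, g A + ∑ A ∈ 𝓐₂, infAt G' A := by
    rw [← Finset.sum_filter_add_sum_filter_not 𝓐 fun A => g A ≤ infAt G' A]
    congr 1 <;> refine Finset.sum_congr rfl fun A hA => ?_ <;> rw [infAt_insert hG.map]
    · exact min_eq_left (Finset.mem_filter.1 hA).2
    · exact min_eq_right (le_of_not_ge (Finset.mem_filter.1 hA).2)
  have hsup : 𝓐.sup id = 𝓐₂.sup id ∪ 𝓐₁.sup id := by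
    rw [Finset.union_comm, ← Finset.sup_eq_union, ← Finset.sup_union,
      Finset.filter_union_filter_not_eq]
  have h₁ := hsup ▸ hg.le_add_sum hδ.1 (𝓐₂.sup id) 𝓐₁
  have h₂ := hh.apply_map_kuratowskiEmb_le hδ hG 𝓐₂
  have h₃ := hgh (𝓐₂.sup id)
  linarith

/-- `r` on finite subsets of `T_X`, but `0` at `∅` as `MemP` demands, whatever `r ∅` is. -/
def restrictTightSpan (r : Finset (Finset X → ℝ) → ℝ) (F : Finset (TightSpan δ)) : ℝ :=
  if F = ∅ then 0 else r (F.map (Embedding.subtype _))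

theorem memP_restrictTightSpan {r : Finset (Finset X → ℝ) → ℝ}
    (hr : ∀ 𝓕 : Finset (Finset (Finset X → ℝ)),
      (∀ F ∈ 𝓕, ∀ f ∈ F, MemT δ f) → deltaT δ (𝓕.sup id) ≤ ∑ F ∈ 𝓕, r F) :
    MemP (TightSpan.diversity δ) (restrictTightSpan (δ := δ) r) := by
  refine ⟨if_pos rfl, fun 𝓕 => ?_⟩
  let e := (Finset.mapEmbedding (Embedding.subtype (MemT δ))).toEmbedding
  have hmem : ∀ F ∈ (𝓕.erase ∅).map e, ∀ f ∈ F, MemT δ f := by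
    simp only [Finset.mem_map]
    rintro _ ⟨F, -, rfl⟩ f hf
    obtain ⟨f, -, rfl⟩ := Finset.mem_map.1 hf
    exact f.2
  calc TightSpan.diversity δ (𝓕.sup id) = deltaT δ (((𝓕.erase ∅).map e).sup id) := by
        rw [TightSpan.diversity, ← Finset.map_sup_id]
        exact congrArg _ (congrArg _ (Finset.sup_erase_bot 𝓕).symm)
    _ ≤ ∑ F ∈ (𝓕.erase ∅).map e, r F := hr _ hmem
    _ = ∑ F ∈ 𝓕.erase ∅, restrictTightSpan r F := by
        rw [Finset.sum_map]
        exact Finset.sum_congr rfl fun F hF => (if_neg (Finset.ne_of_mem_erase hF)).symm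
    _ = ∑ F ∈ 𝓕, restrictTightSpan r F := Finset.sum_erase _ (if_pos rfl)

theorem restrictTightSpan_le {r : Finset (Finset X → ℝ) → ℝ} {F : Finset (TightSpan δ)}
    (hr : 0 ≤ r (F.map (Embedding.subtype _))) :
    restrictTightSpan r F ≤ r (F.map (Embedding.subtype _)) := by
  unfold restrictTightSpan
  split_ifs
  exacts [hr, le_rfl]

theorem MemP.comp_kuratowskiEmb (hδ : IsDiversity δ) {h : Finset (TightSpan δ) → ℝ}
    (hh : MemP (TightSpan.diversity δ) h) : MemP δ fun A => h (A.map (kuratowskiEmb hδ)) := by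
  refine ⟨by simpa using hh.1, fun 𝓐 => ?_⟩
  let e := (Finset.mapEmbedding (kuratowskiEmb hδ)).toEmbedding
  calc δ (𝓐.sup id) ≤ deltaT δ ((𝓐.sup id).image (kuratowski δ)) :=
        le_deltaT_image_kuratowski hδ _
    _ = TightSpan.diversity δ ((𝓐.map e).sup id) := by
        rw [TightSpan.diversity, ← Finset.map_sup_id, map_kuratowskiEmb]
    _ ≤ ∑ F ∈ 𝓐.map e, h F := hh.2 _
    _ = ∑ A ∈ 𝓐, h (A.map (kuratowskiEmb hδ)) := Finset.sum_map _ _ _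

end TightSpan

/-- the tight span `(T_X, δ_T)` is hyperconvex: for every `r` on finite
subsets of `T_X` with `Σ_{F ∈ 𝓕} r F ≥ δ_T (⋃𝓕)` for all finite collections `𝓕` of finite
subsets of `T_X`, there is `g ∈ T_X` with `δ_T (G ∪ {g}) ≤ r G` for all finite `G ⊆ T_X`. -/
theorem tightSpan_hyperconvex {X : Type*} (δ : Finset X → ℝ) (hδ : IsDiversity δ)
    (r : Finset (Finset X → ℝ) → ℝ)
    (hr : ∀ 𝓕 : Finset (Finset (Finset X → ℝ)),
      (∀ F ∈ 𝓕, ∀ f ∈ F, MemT δ f) → deltaT δ (𝓕.sup id) ≤ ∑ F ∈ 𝓕, r F) :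
    ∃ g : Finset X → ℝ, MemT δ g ∧
      ∀ G : Finset (Finset X → ℝ), (∀ f ∈ G, MemT δ f) →
        deltaT δ (insert g G) ≤ r G := by
  obtain ⟨h, hhT, hhr⟩ :=
    (memP_restrictTightSpan hr).exists_memT_le (TightSpan.diversity_nonneg hδ)
  obtain ⟨g, hgT, hgh⟩ := (hhT.1.comp_kuratowskiEmb hδ).exists_memT_le hδ.1
  refine ⟨g, hgT, fun G hG => ?_⟩
  have hrG : 0 ≤ r G :=
    (deltaT_nonneg hδ G).trans (by simpa using hr {G} (by simpa using hG))
  set G' := G.subtype (MemT δ)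
  rw [← Finset.subtype_map_of_mem hG] at hrG ⊢
  calc deltaT δ (insert g (G'.map _)) ≤ h G' := deltaT_insert_le hδ hhT hgT.1 hgh G'
    _ ≤ restrictTightSpan r G' := hhr G'
    _ ≤ r (G'.map _) := restrictTightSpan_le hrG

end
end
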